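/- Let Φ be a Young function and φ be almost decreasing with φ(r)r^n almost increasing. If ∫_1^∞ Φ⁻¹(φ(t))/t dt < ∞, then for every f in the Orlicz–Campanato space 𝓛^{(Φ,φ)}(ℝⁿ) there exists a constant σ(f) such that for every a ∈ ℝⁿ, the averages f_{B(a,r)} converge to σ(f) as r → ∞. -/

import Mathlib

open MeasureTheory Set Metric Filter NNReal ENNReal Topology

noncomputable section

/-- Generalized inverse in the sense of O'Neil. -/
def ginv (Φ : ℝ≥0∞ → ℝ≥0∞) (u : ℝ≥0∞) : ℝ≥0∞ :=
  if u = ⊤ then ⊤ else sInf {t | u < Φ t}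

/-- A Young function: increasing, convex, vanishing at 0, left continuous,
not identically zero nor identically infinite. -/
structure IsYoung (Φ : ℝ≥0∞ → ℝ≥0∞) : Prop where
  mono : Monotone Φ
  zero : Φ 0 = 0
  top : Φ ⊤ = ⊤
  conv : ∀ (x y : ℝ≥0∞) (a b : ℝ≥0), a + b = 1 →
    Φ ((a : ℝ≥0∞) * x + (b : ℝ≥0∞) * y) ≤ (a : ℝ≥0∞) * Φ x + (b : ℝ≥0∞) * Φ y
  lcont : ∀ t : ℝ≥0∞, t < sInf {s | Φ s = ⊤} →
    Filter.Tendsto Φ (nhdsWithin t (Set.Iio t)) (nhds (Φ t))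
  pos : ∃ t, 0 < t ∧ Φ t ≠ ⊤
  fin : ∃ t, t ≠ ⊤ ∧ Φ t ≠ 0

/-- `θ` is almost decreasing on `(0,∞)`. -/
def AlmostDecreasingOn (θ : ℝ → ℝ) : Prop :=
  ∃ C : ℝ, 0 < C ∧ ∀ r s : ℝ, 0 < r → r < s → θ s ≤ C * θ r

/-- `θ` is almost increasing on `(0,∞)`. -/
def AlmostIncreasingOn (θ : ℝ → ℝ) : Prop :=
  ∃ C : ℝ, 0 < C ∧ ∀ r s : ℝ, 0 < r → r < s → θ r ≤ C * θ s

/-- The class `𝒢^dec`: positive, almost decreasing `φ` with `r ↦ φ(r) rⁿ` almost increasing. -/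
def Gdec (n : ℕ) (φ : ℝ → ℝ) : Prop :=
  (∀ r : ℝ, 0 < r → 0 < φ r) ∧ AlmostDecreasingOn φ ∧
    AlmostIncreasingOn (fun r => φ r * r ^ n)

variable {n : ℕ}

/-- The Orlicz–Morrey "norm" of `f` on the ball `B(a,r)`. -/
def ballNorm (Φ : ℝ≥0∞ → ℝ≥0∞) (φ : ℝ → ℝ)
    (f : EuclideanSpace ℝ (Fin n) → ℝ) (a : EuclideanSpace ℝ (Fin n)) (r : ℝ) : ℝ≥0∞ :=
  sInf {lam : ℝ≥0∞ | 0 < lam ∧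
    (ENNReal.ofReal (φ r))⁻¹ * ((volume (ball a r))⁻¹ *
      ∫⁻ x in ball a r, Φ (ENNReal.ofReal |f x| / lam)) ≤ 1}

/-- The Orlicz–Morrey norm `‖f‖_{L^{(Φ,φ)}}`: supremum over all balls of `ballNorm`. -/
def omNorm (Φ : ℝ≥0∞ → ℝ≥0∞) (φ : ℝ → ℝ) (f : EuclideanSpace ℝ (Fin n) → ℝ) : ℝ≥0∞ :=
  ⨆ (a : EuclideanSpace ℝ (Fin n)) (r : ℝ) (_ : 0 < r), ballNorm Φ φ f a r

/-- The Orlicz–Campanato norm `‖f‖_{𝓛^{(Φ,φ)}} = sup_B ‖f − f_B‖_{Φ,φ,B}`. -/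
def campNorm (Φ : ℝ≥0∞ → ℝ≥0∞) (φ : ℝ → ℝ) (f : EuclideanSpace ℝ (Fin n) → ℝ) : ℝ≥0∞ :=
  ⨆ (a : EuclideanSpace ℝ (Fin n)) (r : ℝ) (_ : 0 < r),
    ballNorm Φ φ (fun x => f x - ⨍ y in ball a r, f y) a r

/-!
Let `M` be the Campanato norm of `f`. On a ball `B = B(b, s)` the modular of `(f - f_B) / (M + 1)`
is at most `φ(s) |B|`, and splitting the values of `|f - f_B|` at any level `t` with
`φ(s) < Φ(t)` turns this into `∫_B |f - f_B| ≤ 2 (M + 1) Φ⁻¹(φ(s)) |B|`. Hence nested balls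
`B(a, r) ⊆ B(b, s)` have averages within `(s / r)ⁿ 2 (M + 1) Φ⁻¹(φ(s))` of each other.
Since `φ` is almost decreasing and `Φ⁻¹(C u) ≤ C Φ⁻¹(u)` for `C ≥ 1`, the terms
`Φ⁻¹(φ(2ᵏ⁺¹))` are bounded by the integrals of `Φ⁻¹(φ(t)) / t` over `(2ᵏ, 2ᵏ⁺¹)`, so they are
summable: the averages over `B(0, 2ᵏ)` form a Cauchy sequence with some limit `σ`. A large ball
`B(a, r)` lies in a dyadic ball `B(0, 2ᵏ)` with `2ᵏ ≤ 4 r`, whose average is therefore within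
`4ⁿ 2 (M + 1) Φ⁻¹(φ(2ᵏ)) → 0` of that of `B(a, r)`.
-/

theorem ENNReal.le_mul_of_inv_mul_inv_mul_le_one {a b c : ℝ≥0∞} (hb0 : b ≠ 0) (hb : b ≠ ⊤)
    (h : a⁻¹ * (b⁻¹ * c) ≤ 1) : c ≤ a * b := by
  rwa [← mul_assoc, ← ENNReal.mul_inv (Or.inr hb) (Or.inr hb0), ← ENNReal.div_eq_inv_mul,
    ENNReal.div_le_iff_le_mul (Or.inr ENNReal.one_ne_top) (Or.inr one_ne_zero), one_mul] at h

theorem abs_setAverage_sub_le {α : Type*} [MeasurableSpace α] {μ : Measure α} {s t : Set α}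
    (hst : s ⊆ t) (hs0 : μ s ≠ 0) (ht : μ t ≠ ⊤) {f : α → ℝ} (hf : IntegrableOn f t μ) (c : ℝ) :
    |(⨍ x in s, f x ∂μ) - c| ≤ (μ.real s)⁻¹ * ∫ x in t, |f x - c| ∂μ := by
  have hs : μ s ≠ ⊤ := ne_top_of_le_ne_top ht (measure_mono hst)
  have hpos : 0 < μ.real s := ENNReal.toReal_pos hs0 hs
  have hsub_avg : (⨍ x in s, f x ∂μ) - c = (μ.real s)⁻¹ * ∫ x in s, (f x - c) ∂μ := by
    rw [setAverage_eq, integral_sub (hf.mono_set hst) (integrableOn_const hs), setIntegral_const,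
      smul_eq_mul, smul_eq_mul]
    field_simp
  rw [hsub_avg, abs_mul, abs_inv, abs_of_pos hpos]
  gcongr
  calc |∫ x in s, (f x - c) ∂μ| ≤ ∫ x in s, |f x - c| ∂μ := abs_integral_le_integral_abs
    _ ≤ ∫ x in t, |f x - c| ∂μ :=
      setIntegral_mono_set (hf.sub (integrableOn_const ht)).abs
        (Eventually.of_forall fun x => abs_nonneg _) hst.eventuallyLE

theorem measureReal_ball_div_measureReal_ball {E : Type*} [NormedAddCommGroup E]
    [NormedSpace ℝ E] [MeasurableSpace E] [BorelSpace E] [FiniteDimensional ℝ E] (μ : Measure E)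
    [μ.IsAddHaarMeasure] (a b : E) {r s : ℝ} (hr : 0 < r) (hs : 0 < s) :
    μ.real (ball b s) / μ.real (ball a r) = (s / r) ^ Module.finrank ℝ E := by
  have hunit : (μ (ball 0 1)).toReal ≠ 0 :=
    (ENNReal.toReal_pos (measure_ball_pos μ 0 one_pos).ne' measure_ball_lt_top.ne).ne'
  simp only [measureReal_def, Measure.addHaar_ball_of_pos μ _ hr,
    Measure.addHaar_ball_of_pos μ _ hs, ENNReal.toReal_mul,
    ENNReal.toReal_ofReal (pow_nonneg hr.le _), ENNReal.toReal_ofReal (pow_nonneg hs.le _)]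
  rw [div_pow]
  field_simp

theorem exists_le_two_pow_le_two_mul (x : ℝ) :
    ∃ k : ℕ, x ≤ 2 ^ k ∧ (2 : ℝ) ^ k ≤ 2 * max 1 x := by
  obtain ⟨m, hm, hm'⟩ := exists_nat_pow_near (le_max_left 1 x) one_lt_two
  exact ⟨m + 1, (le_max_right 1 x).trans hm'.le, by rw [pow_succ']; gcongr⟩

theorem AlmostDecreasingOn.exists_ofReal_le {φ : ℝ → ℝ} (h : AlmostDecreasingOn φ) :
    ∃ C : ℝ≥0, 1 ≤ C ∧
      ∀ r s : ℝ, 0 < r → r < s → ENNReal.ofReal (φ s) ≤ C * ENNReal.ofReal (φ r) := by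
  obtain ⟨C, hC, hdec⟩ := h
  refine ⟨(max C 1).toNNReal, Real.one_le_toNNReal.2 (le_max_right C 1), fun r s hr hrs => ?_⟩
  calc ENNReal.ofReal (φ s) ≤ ENNReal.ofReal (C * φ r) :=
        ENNReal.ofReal_le_ofReal (hdec r s hr hrs)
    _ = ENNReal.ofReal C * ENNReal.ofReal (φ r) := ENNReal.ofReal_mul hC.le
    _ ≤ ENNReal.ofReal (max C 1) * ENNReal.ofReal (φ r) := by gcongr; exact le_max_left C 1

theorem ginv_mono (Φ : ℝ≥0∞ → ℝ≥0∞) : Monotone (ginv Φ) := by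
  intro u v huv
  unfold ginv
  split_ifs with hu hv hv
  · exact le_rfl
  · exact absurd (top_le_iff.mp (hu ▸ huv)) hv
  · exact le_top
  · exact sInf_le_sInf fun t ht => huv.trans_lt ht

theorem le_mul_ginv_of_forall {Φ : ℝ≥0∞ → ℝ≥0∞} {w x C : ℝ≥0∞} (hw : w ≠ ⊤) (hC0 : C ≠ 0)
    (hCtop : C ≠ ⊤) (h : ∀ t, w < Φ t → x ≤ C * t) : x ≤ C * ginv Φ w := by
  rw [ginv, if_neg hw, mul_comm, ← ENNReal.div_le_iff_le_mul (Or.inl hC0) (Or.inl hCtop)]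
  refine le_sInf fun t ht => ?_
  rw [ENNReal.div_le_iff_le_mul (Or.inl hC0) (Or.inl hCtop), mul_comm]
  exact h t ht

namespace IsYoung

variable {Φ : ℝ≥0∞ → ℝ≥0∞}

theorem mul_apply_le_apply_mul (hY : IsYoung Φ) {C : ℝ≥0} (hC : 1 ≤ C) (t : ℝ≥0∞) :
    C * Φ t ≤ Φ (C * t) := by
  have hC0 : C ≠ 0 := (zero_lt_one.trans_le hC).ne'
  have hconv := hY.conv (C * t) 0 C⁻¹ (1 - C⁻¹)
    (add_tsub_cancel_of_le (inv_le_one_of_one_le₀ hC))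
  rw [mul_zero, add_zero, hY.zero, mul_zero, add_zero, ← mul_assoc, ← ENNReal.coe_mul,
    inv_mul_cancel₀ hC0, ENNReal.coe_one, one_mul] at hconv
  calc (C : ℝ≥0∞) * Φ t ≤ C * ((C⁻¹ : ℝ≥0) * Φ (C * t)) := by gcongr
    _ = Φ (C * t) := by
      rw [← mul_assoc, ← ENNReal.coe_mul, mul_inv_cancel₀ hC0, ENNReal.coe_one, one_mul]

theorem le_add_mul_div (hY : IsYoung Φ) {t : ℝ≥0∞} (hΦ0 : Φ t ≠ 0) (hΦtop : Φ t ≠ ⊤)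
    (v : ℝ≥0∞) : v ≤ t + Φ v * (t / Φ t) := by
  have ht0 : t ≠ 0 := by rintro rfl; exact hΦ0 hY.zero
  have htop : t ≠ ⊤ := by rintro rfl; exact hΦtop hY.top
  rcases le_or_gt v t with hvt | htv
  · exact le_add_right hvt
  refine le_add_left ?_
  rcases eq_or_ne v ⊤ with rfl | hv
  · rw [hY.top, ENNReal.top_mul (ENNReal.div_pos ht0 hΦtop).ne']
  lift v to ℝ≥0 using hv
  lift t to ℝ≥0 using htop
  have ht0' : t ≠ 0 := by exact_mod_cast ht0
  -- `Φ(x) / x` is nondecreasing.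
  have hratio : ((v / t : ℝ≥0) : ℝ≥0∞) * t = v := by
    rw [← ENNReal.coe_mul, div_mul_cancel₀ _ ht0']
  calc (v : ℝ≥0∞) = (v / t : ℝ≥0) * (Φ t * (t / Φ t)) := by
        rw [ENNReal.mul_div_cancel hΦ0 hΦtop, hratio]
    _ = (v / t : ℝ≥0) * Φ t * (t / Φ t) := by ring
    _ ≤ Φ v * (t / Φ t) := by
        gcongr
        rw [← hratio]
        exact hY.mul_apply_le_apply_mul
          ((one_le_div₀ (pos_iff_ne_zero.2 ht0')).2 (by exact_mod_cast htv.le)) _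

theorem ginv_mul_le (hY : IsYoung Φ) {C : ℝ≥0} (hC : 1 ≤ C) (u : ℝ≥0∞) :
    ginv Φ (C * u) ≤ C * ginv Φ u := by
  have hC0 : (C : ℝ≥0∞) ≠ 0 := by exact_mod_cast (zero_lt_one.trans_le hC).ne'
  rcases eq_or_ne u ⊤ with rfl | hu
  · simp [ginv, ENNReal.mul_top hC0]
  refine le_mul_ginv_of_forall hu hC0 ENNReal.coe_ne_top fun t ht => ?_
  rw [ginv, if_neg (ENNReal.mul_ne_top ENNReal.coe_ne_top hu)]
  exact sInf_le ((ENNReal.mul_lt_mul_right hC0 ENNReal.coe_ne_top ht).trans_le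
    (hY.mul_apply_le_apply_mul hC t))

theorem ginv_ne_top (hY : IsYoung Φ) {u : ℝ≥0∞} (hu : u ≠ ⊤) : ginv Φ u ≠ ⊤ := by
  obtain ⟨t, ht, hΦt⟩ := hY.fin
  obtain ⟨m, hm⟩ := ENNReal.exists_nat_mul_gt hΦt hu
  have hu' : u < ((m + 1 : ℝ≥0) : ℝ≥0∞) * Φ t :=
    hm.trans_le (by gcongr; exact_mod_cast le_self_add)
  have hlt : u < Φ (((m + 1 : ℝ≥0) : ℝ≥0∞) * t) :=
    hu'.trans_le (hY.mul_apply_le_apply_mul le_add_self t)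
  rw [ginv, if_neg hu]
  exact ne_top_of_le_ne_top (ENNReal.mul_ne_top ENNReal.coe_ne_top ht) (sInf_le hlt)

/-- The factor `2` replaces Jensen's inequality: split each value of `g` at a level `t` with
`w < Φ t`, using `le_add_mul_div` above that level. -/
theorem setLIntegral_le_two_mul_ginv (hY : IsYoung Φ) {α : Type*} [MeasurableSpace α]
    {μ : Measure α} {s : Set α} (hs0 : μ s ≠ 0) (hs : μ s ≠ ⊤) {g : α → ℝ≥0∞}
    (hg : AEMeasurable g (μ.restrict s)) {w : ℝ≥0∞} (hw : w ≠ ⊤)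
    (hmod : ∫⁻ x in s, Φ (g x) ∂μ ≤ w * μ s) :
    ∫⁻ x in s, g x ∂μ ≤ 2 * ginv Φ w * μ s := by
  have hΦg : AEMeasurable (fun x => Φ (g x)) (μ.restrict s) :=
    hY.mono.measurable.comp_aemeasurable hg
  rw [mul_right_comm]
  refine le_mul_ginv_of_forall hw (by simp [hs0]) (by simp [hs, ENNReal.mul_eq_top])
    fun t hwt => ?_
  by_cases hΦt : Φ t = ⊤
  · have hg_le : ∀ᵐ x ∂μ.restrict s, g x ≤ t := by
      have hfin : ∀ᵐ x ∂μ.restrict s, Φ (g x) < ⊤ :=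
        ae_lt_top' hΦg (hmod.trans_lt (ENNReal.mul_lt_top hw.lt_top hs.lt_top)).ne
      filter_upwards [hfin] with x hx
      by_contra! hgt
      exact hx.ne (top_le_iff.1 (hΦt ▸ hY.mono hgt.le))
    calc ∫⁻ x in s, g x ∂μ ≤ ∫⁻ _ in s, t ∂μ := lintegral_mono_ae hg_le
      _ = t * μ s := setLIntegral_const s t
      _ ≤ 2 * μ s * t := by
        rw [mul_comm, mul_assoc]
        exact le_mul_of_one_le_left zero_le one_le_two
  have hΦ0 : Φ t ≠ 0 := (zero_le.trans_lt hwt).ne'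
  calc ∫⁻ x in s, g x ∂μ ≤ ∫⁻ x in s, (t + Φ (g x) * (t / Φ t)) ∂μ :=
        lintegral_mono fun x => hY.le_add_mul_div hΦ0 hΦt (g x)
    _ = t * μ s + (∫⁻ x in s, Φ (g x) ∂μ) * (t / Φ t) := by
        rw [lintegral_add_left measurable_const, setLIntegral_const,
          lintegral_mul_const'' _ hΦg]
    _ ≤ t * μ s + w * μ s * (t / Φ t) := by gcongr
    _ ≤ t * μ s + Φ t * (t / Φ t) * μ s := by
        rw [mul_right_comm w]
        gcongr
    _ = 2 * μ s * t := by
        rw [ENNReal.mul_div_cancel hΦ0 hΦt]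
        ring

theorem ginv_two_pow_succ_le {φ : ℝ → ℝ} (hY : IsYoung Φ) {C : ℝ≥0} (hC : 1 ≤ C)
    (hφ : ∀ r s : ℝ, 0 < r → r < s → ENNReal.ofReal (φ s) ≤ C * ENNReal.ofReal (φ r)) (k : ℕ) :
    ginv Φ (ENNReal.ofReal (φ (2 ^ (k + 1)))) ≤
      2 * C * ∫⁻ t in Ioo (2 ^ k : ℝ) (2 ^ (k + 1)),
        ginv Φ (ENNReal.ofReal (φ t)) / ENNReal.ofReal t := by
  set p : ℝ := 2 ^ k
  have hp : 0 < p := by positivity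
  rw [show (2 : ℝ) ^ (k + 1) = 2 * p from pow_succ' 2 k]
  have hp0 : ENNReal.ofReal p ≠ 0 := (ENNReal.ofReal_pos.2 hp).ne'
  have hpt : ∀ t ∈ Ioo p (2 * p), ginv Φ (ENNReal.ofReal (φ (2 * p))) ≤
      C * ENNReal.ofReal (2 * p) * (ginv Φ (ENNReal.ofReal (φ t)) / ENNReal.ofReal t) := by
    intro t ⟨hpt, htq⟩
    have ht0 : ENNReal.ofReal t ≠ 0 := (ENNReal.ofReal_pos.2 (hp.trans hpt)).ne'
    calc ginv Φ (ENNReal.ofReal (φ (2 * p)))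
        ≤ ginv Φ (C * ENNReal.ofReal (φ t)) := ginv_mono Φ (hφ t _ (hp.trans hpt) htq)
      _ ≤ C * ginv Φ (ENNReal.ofReal (φ t)) := hY.ginv_mul_le hC _
      _ = C * (ginv Φ (ENNReal.ofReal (φ t)) / ENNReal.ofReal t * ENNReal.ofReal t) := by
          rw [ENNReal.div_mul_cancel ht0 ENNReal.ofReal_ne_top]
      _ ≤ C * (ginv Φ (ENNReal.ofReal (φ t)) / ENNReal.ofReal t * ENNReal.ofReal (2 * p)) := by
          gcongr
      _ = _ := by ring
  rw [← ENNReal.mul_le_mul_iff_left hp0 ENNReal.ofReal_ne_top]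
  calc ginv Φ (ENNReal.ofReal (φ (2 * p))) * ENNReal.ofReal p
      = ∫⁻ _ in Ioo p (2 * p), ginv Φ (ENNReal.ofReal (φ (2 * p))) := by
        rw [setLIntegral_const, Real.volume_Ioo, two_mul, add_sub_cancel_right]
    _ ≤ ∫⁻ t in Ioo p (2 * p),
          C * ENNReal.ofReal (2 * p) * (ginv Φ (ENNReal.ofReal (φ t)) / ENNReal.ofReal t) :=
        setLIntegral_mono' measurableSet_Ioo hpt
    _ = 2 * C * (∫⁻ t in Ioo p (2 * p), ginv Φ (ENNReal.ofReal (φ t)) / ENNReal.ofReal t) *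
          ENNReal.ofReal p := by
        rw [lintegral_const_mul' _ _ (by finiteness), ENNReal.ofReal_mul zero_le_two,
          ENNReal.ofReal_ofNat]
        ring

end IsYoung

section Dyadic

variable {Φ : ℝ≥0∞ → ℝ≥0∞} {φ : ℝ → ℝ}

theorem tsum_ginv_two_pow_succ_ne_top (hY : IsYoung Φ) (hφdec : AlmostDecreasingOn φ)
    (hint : ∫⁻ t in Ioi (1 : ℝ), ginv Φ (ENNReal.ofReal (φ t)) / ENNReal.ofReal t < ⊤) :
    ∑' k : ℕ, ginv Φ (ENNReal.ofReal (φ (2 ^ (k + 1)))) ≠ ⊤ := by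
  obtain ⟨C, hC, hφ⟩ := hφdec.exists_ofReal_le
  set F : ℝ → ℝ≥0∞ := fun t => ginv Φ (ENNReal.ofReal (φ t)) / ENNReal.ofReal t
  have hdisj : Pairwise (Function.onFun Disjoint fun k : ℕ => Ioo (2 ^ k : ℝ) (2 ^ (k + 1))) := by
    simpa only [Order.succ_eq_add_one] using
      (pow_right_mono₀ one_le_two : Monotone fun k : ℕ => (2 : ℝ) ^ k).pairwise_disjoint_on_Ioo_succ
  refine ne_top_of_le_ne_top (ENNReal.mul_ne_top (a := 2 * C) (by finiteness) hint.ne) ?_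
  calc ∑' k : ℕ, ginv Φ (ENNReal.ofReal (φ (2 ^ (k + 1))))
      ≤ ∑' k : ℕ, 2 * C * ∫⁻ t in Ioo (2 ^ k : ℝ) (2 ^ (k + 1)), F t :=
        ENNReal.tsum_le_tsum (hY.ginv_two_pow_succ_le hC hφ)
    _ = 2 * C * ∫⁻ t in ⋃ k : ℕ, Ioo (2 ^ k : ℝ) (2 ^ (k + 1)), F t := by
        rw [ENNReal.tsum_mul_left, lintegral_iUnion (fun _ => measurableSet_Ioo) hdisj]
    _ ≤ 2 * C * ∫⁻ t in Ioi (1 : ℝ), F t := by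
        gcongr
        exact iUnion_subset fun k t ht => (one_le_pow₀ one_le_two).trans_lt ht.1

theorem tendsto_toReal_ginv_two_pow (hY : IsYoung Φ) (hφdec : AlmostDecreasingOn φ)
    (hint : ∫⁻ t in Ioi (1 : ℝ), ginv Φ (ENNReal.ofReal (φ t)) / ENNReal.ofReal t < ⊤) :
    Tendsto (fun k : ℕ => (ginv Φ (ENNReal.ofReal (φ (2 ^ k)))).toReal) atTop (𝓝 0) :=
  (tendsto_add_atTop_iff_nat 1).1
    (ENNReal.summable_toReal (tsum_ginv_two_pow_succ_ne_top hY hφdec hint)).tendsto_atTop_zero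

end Dyadic

section Campanato

variable {Φ : ℝ≥0∞ → ℝ≥0∞} {φ : ℝ → ℝ}

theorem setLIntegral_le_of_ballNorm_lt (hΦ : Monotone Φ) {g : EuclideanSpace ℝ (Fin n) → ℝ}
    {a : EuclideanSpace ℝ (Fin n)} {r : ℝ} (hr : 0 < r) {lam : ℝ≥0∞}
    (h : ballNorm Φ φ g a r < lam) :
    ∫⁻ x in ball a r, Φ (ENNReal.ofReal |g x| / lam) ≤
      ENNReal.ofReal (φ r) * volume (ball a r) := by
  obtain ⟨l, ⟨-, hl⟩, hl_lt⟩ := sInf_lt_iff.1 h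
  refine le_trans ?_ (ENNReal.le_mul_of_inv_mul_inv_mul_le_one
    (measure_ball_pos volume a hr).ne' measure_ball_lt_top.ne hl)
  gcongr with x
  exact hΦ (ENNReal.div_le_div_left hl_lt.le _)

theorem setLIntegral_abs_sub_setAverage_le (hY : IsYoung Φ) {f : EuclideanSpace ℝ (Fin n) → ℝ}
    (hf : LocallyIntegrable f volume) (hfC : campNorm Φ φ f ≠ ⊤) (b : EuclideanSpace ℝ (Fin n))
    {s : ℝ} (hs : 0 < s) :
    ∫⁻ x in ball b s, ENNReal.ofReal |f x - ⨍ y in ball b s, f y| ≤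
      2 * (campNorm Φ φ f + 1) * ginv Φ (ENNReal.ofReal (φ s)) * volume (ball b s) := by
  set c := ⨍ y in ball b s, f y
  set lam := campNorm Φ φ f + 1
  have hlam0 : lam ≠ 0 := by simp [lam]
  have hlam : lam ≠ ⊤ := ENNReal.add_ne_top.2 ⟨hfC, ENNReal.one_ne_top⟩
  have hlt : ballNorm Φ φ (fun x => f x - c) b s < lam :=
    (le_iSup₂_of_le b s (le_iSup_of_le hs le_rfl) : _ ≤ campNorm Φ φ f).trans_lt
      (ENNReal.lt_add_right hfC one_ne_zero)
  have hmeas : AEMeasurable f (volume.restrict (ball b s)) :=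
    hf.aestronglyMeasurable.aemeasurable.restrict
  have hscaled := hY.setLIntegral_le_two_mul_ginv (measure_ball_pos volume b hs).ne'
    measure_ball_lt_top.ne (by fun_prop) ENNReal.ofReal_ne_top
    (setLIntegral_le_of_ballNorm_lt hY.mono hs hlt)
  simp_rw [ENNReal.div_eq_inv_mul] at hscaled
  rw [lintegral_const_mul' _ _ (ENNReal.inv_ne_top.2 hlam0), ENNReal.inv_mul_le_iff hlam0 hlam]
    at hscaled
  calc _ ≤ lam * (2 * ginv Φ (ENNReal.ofReal (φ s)) * volume (ball b s)) := hscaled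
    _ = _ := by ring

theorem abs_setAverage_ball_sub_setAverage_ball_le (hY : IsYoung Φ)
    {f : EuclideanSpace ℝ (Fin n) → ℝ} (hf : LocallyIntegrable f volume)
    (hfC : campNorm Φ φ f ≠ ⊤) {a b : EuclideanSpace ℝ (Fin n)} {r s : ℝ} (hr : 0 < r)
    (hsub : ball a r ⊆ ball b s) :
    |(⨍ y in ball a r, f y) - ⨍ y in ball b s, f y| ≤
      (s / r) ^ n * (2 * (campNorm Φ φ f + 1) * ginv Φ (ENNReal.ofReal (φ s))).toReal := by
  have hs : 0 < s := pos_of_mem_ball (hsub (mem_ball_self hr))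
  set c := ⨍ y in ball b s, f y
  set K := 2 * (campNorm Φ φ f + 1) * ginv Φ (ENNReal.ofReal (φ s))
  have hK : K ≠ ⊤ := ENNReal.mul_ne_top (ENNReal.mul_ne_top ENNReal.ofNat_ne_top
    (ENNReal.add_ne_top.2 ⟨hfC, ENNReal.one_ne_top⟩)) (hY.ginv_ne_top ENNReal.ofReal_ne_top)
  have hfB : IntegrableOn f (ball b s) volume :=
    (hf.integrableOn_isCompact (isCompact_closedBall b s)).mono_set ball_subset_closedBall
  have hfB_meas := hfB.aestronglyMeasurable
  have hosc : ∫ x in ball b s, |f x - c| ≤ K.toReal * volume.real (ball b s) := by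
    rw [integral_eq_lintegral_of_nonneg_ae (Eventually.of_forall fun x => abs_nonneg _)
      (by fun_prop), measureReal_def, ← ENNReal.toReal_mul]
    exact ENNReal.toReal_mono (ENNReal.mul_ne_top hK measure_ball_lt_top.ne)
      (setLIntegral_abs_sub_setAverage_le hY hf hfC b hs)
  calc |(⨍ y in ball a r, f y) - c|
      ≤ (volume.real (ball a r))⁻¹ * ∫ x in ball b s, |f x - c| :=
        abs_setAverage_sub_le hsub (measure_ball_pos volume a hr).ne' measure_ball_lt_top.ne hfB c
    _ ≤ (volume.real (ball a r))⁻¹ * (K.toReal * volume.real (ball b s)) := by gcongr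
    _ = volume.real (ball b s) / volume.real (ball a r) * K.toReal := by ring
    _ = (s / r) ^ n * K.toReal := by
        rw [measureReal_ball_div_measureReal_ball volume a b hr hs, finrank_euclideanSpace_fin]

theorem cauchySeq_setAverage_ball_two_pow (hY : IsYoung Φ) (hφdec : AlmostDecreasingOn φ)
    (hint : ∫⁻ t in Ioi (1 : ℝ), ginv Φ (ENNReal.ofReal (φ t)) / ENNReal.ofReal t < ⊤)
    {f : EuclideanSpace ℝ (Fin n) → ℝ} (hf : LocallyIntegrable f volume)
    (hfC : campNorm Φ φ f ≠ ⊤) :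
    CauchySeq fun k : ℕ => ⨍ y in ball (0 : EuclideanSpace ℝ (Fin n)) (2 ^ k), f y := by
  set κ := (2 * (campNorm Φ φ f + 1)).toReal
  refine cauchySeq_of_dist_le_of_summable
    (fun k => 2 ^ n * κ * (ginv Φ (ENNReal.ofReal (φ (2 ^ (k + 1))))).toReal) (fun k => ?_)
    (((ENNReal.summable_toReal (tsum_ginv_two_pow_succ_ne_top hY hφdec hint)).mul_left κ).mul_left
      (2 ^ n) |>.congr fun k => by ring)
  have hstep := abs_setAverage_ball_sub_setAverage_ball_le hY hf hfC (pow_pos two_pos k)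
    (ball_subset_ball (x := 0) (pow_le_pow_right₀ one_le_two k.le_succ))
  rw [pow_succ, mul_div_cancel_left₀ _ (pow_ne_zero k two_ne_zero), ENNReal.toReal_mul,
    ← mul_assoc, ← pow_succ] at hstep
  exact hstep

end Campanato

theorem stmt12_general {n : ℕ} (Φ : ℝ≥0∞ → ℝ≥0∞) (hY : IsYoung Φ) (φ : ℝ → ℝ)
    (hφdec : AlmostDecreasingOn φ)
    (hint : ∫⁻ t in Set.Ioi (1 : ℝ), ginv Φ (ENNReal.ofReal (φ t)) / ENNReal.ofReal t < ⊤)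
    (f : EuclideanSpace ℝ (Fin n) → ℝ) (hf : LocallyIntegrable f volume)
    (hfC : campNorm Φ φ f < ⊤) :
    ∃ σ : ℝ, ∀ a : EuclideanSpace ℝ (Fin n),
      Filter.Tendsto (fun r : ℝ => ⨍ y in ball a r, f y) Filter.atTop (nhds σ) := by
  obtain ⟨σ, hσ⟩ := cauchySeq_tendsto_of_complete
    (cauchySeq_setAverage_ball_two_pow hY hφdec hint hf hfC.ne)
  refine ⟨σ, fun a => ?_⟩
  choose K hK using fun r : ℝ => exists_le_two_pow_le_two_mul (r + ‖a‖)
  have hKtop : Tendsto K atTop atTop := tendsto_atTop.2 fun N =>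
    (eventually_ge_atTop (2 ^ N)).mono fun r hr =>
      (pow_le_pow_iff_right₀ (one_lt_two : (1 : ℝ) < 2)).1
        (hr.trans ((le_add_of_nonneg_right (norm_nonneg a)).trans (hK r).1))
  set κ := (2 * (campNorm Φ φ f + 1)).toReal
  have hclose : ∀ᶠ r in atTop, dist (⨍ y in ball 0 (2 ^ K r), f y) (⨍ y in ball a r, f y) ≤
      4 ^ n * κ * (ginv Φ (ENNReal.ofReal (φ (2 ^ K r)))).toReal := by
    filter_upwards [eventually_ge_atTop 1, eventually_ge_atTop ‖a‖] with r hr1 hra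
    have hr : 0 < r := one_pos.trans_le hr1
    have hsub : ball a r ⊆ ball 0 (2 ^ K r) :=
      ball_subset_ball' (by rw [dist_zero_right]; exact (hK r).1)
    have hratio : (2 : ℝ) ^ K r / r ≤ 4 := by
      rw [div_le_iff₀ hr]
      linarith [(hK r).2, max_eq_right (hr1.trans (le_add_of_nonneg_right (norm_nonneg a)))]
    rw [dist_comm, Real.dist_eq, mul_assoc, ← ENNReal.toReal_mul]
    exact (abs_setAverage_ball_sub_setAverage_ball_le hY hf hfC.ne hr hsub).trans (by gcongr)
  refine (hσ.comp hKtop).congr_dist (squeeze_zero' (Eventually.of_forall fun r => dist_nonneg)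
    hclose ?_)
  simpa using ((tendsto_toReal_ginv_two_pow hY hφdec hint).comp hKtop).const_mul (4 ^ n * κ)

/-- if `∫_1^∞ Φ⁻¹(φ(t))/t dt < ∞`, every `f ∈ 𝓛^{(Φ,φ)}(ℝⁿ)` has a
constant `σ(f)` with `f_{B(a,r)} → σ(f)` as `r → ∞`, for every center `a`. -/
theorem stmt12 {n : ℕ} (Φ : ℝ≥0∞ → ℝ≥0∞) (hY : IsYoung Φ) (φ : ℝ → ℝ)
    (hφpos : ∀ r : ℝ, 0 < r → 0 < φ r) (hφdec : AlmostDecreasingOn φ)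
    (hφinc : AlmostIncreasingOn (fun r => φ r * r ^ n))
    (hint : ∫⁻ t in Set.Ioi (1 : ℝ), ginv Φ (ENNReal.ofReal (φ t)) / ENNReal.ofReal t < ⊤)
    (f : EuclideanSpace ℝ (Fin n) → ℝ) (hf : LocallyIntegrable f volume)
    (hfC : campNorm Φ φ f < ⊤) :
    ∃ σ : ℝ, ∀ a : EuclideanSpace ℝ (Fin n),
      Filter.Tendsto (fun r : ℝ => ⨍ y in ball a r, f y) Filter.atTop (nhds σ) :=
  stmt12_general Φ hY φ hφdec hint f hf hfC
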